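/- arXiv:2206.10584 — 3 statements merged into one kernel-verified Lean document; each statement's English description precedes it below -/
import Mathlib

section
/- Let $S$ be a commutative ring, $R$ an $S$-module, and let $\mu_1, \mu_2 : R \times R \to R$ be two $S$-bilinear associative multiplications on $R$. Let $T : R \to S$ be an $S$-linear map. Assume: (i) $T(\mu_1(x,y)) = T(\mu_2(x,y))$ for all $x, y \in R$ (equal $2$-point functions); (ii) $T(\mu_1(x,\mu_1(y,z))) = T(\mu_2(x,\mu_2(y,z)))$ for all $x, y, z \in R$ (equal $3$-point functions); (iii) the trace pairing of $\mu_1$ is non-degenerate, i.e. if $w \in R$ satisfies $T(\mu_1(w,z)) = 0$ for all $z \in R$, then $w = 0$. Then $\mu_1 = \mu_2$. -/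
/-! Non-degeneracy makes `w ↦ T (μ₁ w ·)` injective, so it suffices that `μ₁ x y` and `μ₂ x y` pair
identically with every `z`. Associativity of `μ₁` turns `T (μ₁ (μ₁ x y) z)` into a 3-point function,
which equals that of `μ₂`; associativity of `μ₂` and the 2-point identity then give `T (μ₁ (μ₂ x y) z)`. -/

namespace LinearMap

variable {S R : Type*} [CommRing S] [AddCommGroup R] [Module S R]

theorem SeparatingLeft.eq_of_forall_apply_eq {B : R →ₗ[S] R →ₗ[S] S} (hB : B.SeparatingLeft)
    {w₁ w₂ : R} (h : ∀ z, B w₁ z = B w₂ z) : w₁ = w₂ :=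
  ker_eq_bot.mp (separatingLeft_iff_ker_eq_bot.mp hB) (ext h)

theorem trace_mul_mul_eq_of_point_functions_eq {μ₁ μ₂ : R →ₗ[S] R →ₗ[S] R} {T : R →ₗ[S] S}
    (hassoc₁ : ∀ x y z : R, μ₁ (μ₁ x y) z = μ₁ x (μ₁ y z))
    (hassoc₂ : ∀ x y z : R, μ₂ (μ₂ x y) z = μ₂ x (μ₂ y z))
    (h2pt : ∀ x y : R, T (μ₁ x y) = T (μ₂ x y))
    (h3pt : ∀ x y z : R, T (μ₁ x (μ₁ y z)) = T (μ₂ x (μ₂ y z))) (x y z : R) :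
    T (μ₁ (μ₁ x y) z) = T (μ₁ (μ₂ x y) z) := by
  rw [hassoc₁, h3pt, ← hassoc₂, ← h2pt]

end LinearMap

/-- Abstract uniqueness step of the Frobenius structure conjecture (Theorem 3.1):
an associative `S`-bilinear product on a module is uniquely determined by its
2-point and 3-point trace functions once the trace pairing is non-degenerate. -/
theorem product_unique_from_two_and_three_point_functions
    {S R : Type*} [CommRing S] [AddCommGroup R] [Module S R]
    (μ₁ μ₂ : R →ₗ[S] R →ₗ[S] R)
    (hassoc₁ : ∀ x y z : R, μ₁ (μ₁ x y) z = μ₁ x (μ₁ y z))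
    (hassoc₂ : ∀ x y z : R, μ₂ (μ₂ x y) z = μ₂ x (μ₂ y z))
    (T : R →ₗ[S] S)
    (h2pt : ∀ x y : R, T (μ₁ x y) = T (μ₂ x y))
    (h3pt : ∀ x y z : R, T (μ₁ x (μ₁ y z)) = T (μ₂ x (μ₂ y z)))
    (hnd : ∀ w : R, (∀ z : R, T (μ₁ w z) = 0) → w = 0) :
    μ₁ = μ₂ := by
  have hsep : (μ₁.compr₂ T).SeparatingLeft := hnd
  ext x y
  exact hsep.eq_of_forall_apply_eq
    (LinearMap.trace_mul_mul_eq_of_point_functions_eq hassoc₁ hassoc₂ h2pt h3pt x y)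
end

section
/- Let $A$ be a commutative ring and $J \subseteq A$ an ideal such that $\bigcap_{k \geq 1} J^k = 0$. Let $G$ be an additive abelian group and $F = \bigoplus_{g \in G} A$ the free $A$-module with basis $(e_g)_{g \in G}$ (finitely supported functions $G \to A$). Let $B : F \times F \to A$ be an $A$-bilinear form and $(c_g)_{g \in G}$ a family of elements of $A$ such that: (i) $B(e_g, e_h) \in J$ whenever $g + h \neq 0$; (ii) $B(e_g, e_{-g}) - c_g \in J$ for all $g \in G$; (iii) for every $k \geq 1$ and every $g \in G$, multiplication by $c_g$ is injective on $A/J^k$, i.e. if $a \in A$ and $c_g \cdot a \in J^k$ then $a \in J^k$. Then $B$ is non-degenerate in its first argument: for every nonzero $x \in F$ there exists $g \in G$ with $B(x, e_g) \neq 0$. -/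
/-!
If `B x e_g = 0` for every `g`, induction on `k` shows that every coefficient of `x` lies in
`J ^ k`: pairing `x` with `e_{-g}` gives `0 ≡ c_g x_g` modulo `J ^ (k + 1)`, because every other
contribution is a coefficient in `J ^ k` times a pairing in `J`; cancelling `c_g` then gives
`x_g ∈ J ^ (k + 1)`. So the coefficients of `x` lie in `⋂ₖ J ^ k = 0`.
-/

open Finsupp

theorem Finsupp.map_mem_smul_of_forall {R M ι : Type*} [CommSemiring R] [AddCommMonoid M]
    [Module R M] {I : Ideal R} {N : Submodule R M} (ψ : (ι →₀ R) →ₗ[R] M)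
    (hψ : ∀ i, ψ (single i 1) ∈ N) {x : ι →₀ R} (hx : ∀ i, x i ∈ I) : ψ x ∈ I • N := by
  rw [← x.sum_single, map_finsuppSum]
  refine Submodule.sum_mem _ fun i _ => ?_
  change ψ (single i (x i)) ∈ _
  rw [← smul_single_one, map_smul]
  exact Submodule.smul_mem_smul (hx i) (hψ i)

theorem Finsupp.apply_mem_pow_succ_of_map_eq_zero {A ι : Type*} [CommRing A] [DecidableEq ι]
    {J : Ideal A} {k : ℕ} (φ : (ι →₀ A) →ₗ[A] A) {i : ι} {c : A}
    (hφ : ∀ j ≠ i, φ (single j 1) ∈ J) (hφi : φ (single i 1) - c ∈ J)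
    (hc : ∀ a, c * a ∈ J ^ (k + 1) → a ∈ J ^ (k + 1))
    {x : ι →₀ A} (hφx : φ x = 0) (hx : ∀ j, x j ∈ J ^ k) : x i ∈ J ^ (k + 1) := by
  have hψ : ∀ j, (φ - c • lapply i : (ι →₀ A) →ₗ[A] A) (single j 1) ∈ J := fun j => by
    rcases eq_or_ne j i with rfl | hji
    · simpa using hφi
    · simpa [single_eq_of_ne hji.symm] using hφ j hji
  have hψx := map_mem_smul_of_forall _ hψ hx
  rw [Ideal.smul_eq_mul, ← pow_succ] at hψx
  exact hc _ (by simpa [hφx] using hψx)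

/-- Abstract non-degeneracy of the trace pairing (proof of Theorem 3.1):
given a bilinear form on a free module which, modulo an ideal `J` with
`⋂ₖ Jᵏ = 0`, pairs basis elements `e_g, e_h` trivially unless `g + h = 0`,
and pairs `e_g` with `e_{-g}` as an element `c_g` which is a non-zerodivisor
modulo each `Jᵏ`, the form is non-degenerate in its first argument. -/
theorem trace_pairing_nondegenerate
    {A : Type*} [CommRing A] (J : Ideal A)
    (hJ : ∀ a : A, (∀ k : ℕ, 1 ≤ k → a ∈ J ^ k) → a = 0)
    {G : Type*} [AddCommGroup G]
    (B : (G →₀ A) →ₗ[A] (G →₀ A) →ₗ[A] A)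
    (c : G → A)
    (h1 : ∀ g h : G, g + h ≠ 0 → B (Finsupp.single g 1) (Finsupp.single h 1) ∈ J)
    (h2 : ∀ g : G, B (Finsupp.single g 1) (Finsupp.single (-g) 1) - c g ∈ J)
    (h3 : ∀ k : ℕ, 1 ≤ k → ∀ g : G, ∀ a : A, c g * a ∈ J ^ k → a ∈ J ^ k)
    (x : G →₀ A) (hx : x ≠ 0) :
    ∃ g : G, B x (Finsupp.single g 1) ≠ 0 := by
  classical
  by_contra! hB
  have hxJ : ∀ k g, x g ∈ J ^ k := by
    intro k
    induction k with
    | zero => simp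
    | succ k ih =>
      intro g
      refine apply_mem_pow_succ_of_map_eq_zero (B.flip (single (-g) 1))
        (fun h hhg => h1 h (-g) ?_) (h2 g) (h3 (k + 1) k.succ_pos g) (hB (-g)) ih
      rwa [← sub_eq_add_neg, sub_ne_zero]
  exact hx (Finsupp.ext fun g => hJ _ fun k _ => hxJ k g)
end

section
/- Let $A$ be a commutative ring, $J \subseteq A$ an ideal with $\bigcap_{k \geq 1} J^k = 0$, $G$ an additive abelian group, and $R = \bigoplus_{g \in G} A$ the free $A$-module with basis $(\vartheta_g)_{g \in G}$. Let $T : R \to A$ be the $A$-linear map sending $\sum_g a_g \vartheta_g$ to $a_0$. Let $\mu$ be an associative $A$-bilinear product on $R$ and $(c_g)_{g \in G}$ a family of elements of $A$ such that: (i) $T(\mu(\vartheta_g, \vartheta_h)) \in J$ whenever $g + h \neq 0$; (ii) $T(\mu(\vartheta_g, \vartheta_{-g})) - c_g \in J$ for all $g$; (iii) for every $k \geq 1$ and every $g \in G$, multiplication by $c_g$ is injective on $A/J^k$. Then $\mu$ is the unique associative $A$-bilinear product on $R$ with its $2$-point and $3$-point trace functions: if $\mu'$ is any associative $A$-bilinear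 product on $R$ with $T(\mu'(x,y)) = T(\mu(x,y))$ for all $x, y \in R$ and $T(\mu'(x,\mu'(y,z))) = T(\mu(x,\mu(y,z)))$ for all $x, y, z \in R$, then $\mu' = \mu$. -/
/-!
The trace pairing `(x, y) ↦ T(μ(x, y))` is perfect `J`-adically. By (i) and (ii),
`T(μ(ϑ_{-m}, D)) ≡ c_{-m} D_m` modulo `J` times the coefficients of `D`; so if all these pairings
vanish and the coefficients of `D` lie in `Jᵏ`, then (iii) puts them in `Jᵏ⁺¹`, and separatedness
gives `D = 0`. For `D = μ'(x, y) - μ(x, y)` the pairings vanish by the 2- and 3-point conditions.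
-/

open Finsupp

section JAdic

variable {A ι : Type*} [CommRing A] {J : Ideal A}

theorem Finsupp.map_mem_pow_succ_of_apply_mem_pow (φ : (ι →₀ A) →ₗ[A] A) {E : ι →₀ A} {k : ℕ}
    (hE : ∀ j, E j ∈ J ^ k) (hφ : ∀ j ∈ E.support, φ (single j 1) ∈ J) :
    φ E ∈ J ^ (k + 1) := by
  have hsum : φ E = E.sum fun j a => a * φ (single j 1) := by
    conv_lhs => rw [← E.sum_single]
    rw [map_finsuppSum]
    exact Finsupp.sum_congr fun j _ => by rw [← smul_single_one j (E j), map_smul, smul_eq_mul]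
  rw [hsum, pow_succ]
  exact Ideal.sum_mem _ fun j hj => Ideal.mul_mem_mul (hE j) (hφ j hj)

/-- "Dual mod `J`": modulo `J`, the functional `φ i` is `u i` times the `i`-th coordinate. -/
theorem Finsupp.apply_mem_pow_succ_of_dual_mod
    (φ : ι → (ι →₀ A) →ₗ[A] A) (u : ι → A)
    (hoff : ∀ i j, i ≠ j → φ i (single j 1) ∈ J) (hdiag : ∀ i, φ i (single i 1) - u i ∈ J)
    {k : ℕ} (hu : ∀ i a, u i * a ∈ J ^ (k + 1) → a ∈ J ^ (k + 1))
    {D : ι →₀ A} (hD : ∀ i, φ i D = 0) (hk : ∀ j, D j ∈ J ^ k) (i : ι) :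
    D i ∈ J ^ (k + 1) := by
  have hsplit : φ i (single i 1) * D i + φ i (D.erase i) = 0 := by
    rw [mul_comm, ← smul_eq_mul, ← map_smul, smul_single_one, ← map_add, D.single_add_erase, hD]
  have hrest : φ i (D.erase i) ∈ J ^ (k + 1) := by
    refine map_mem_pow_succ_of_apply_mem_pow (φ i) (fun j => ?_) fun j hj => hoff i j ?_
    · by_cases hji : j = i
      · simp [hji]
      · simpa [erase_ne hji] using hk j
    · rintro rfl
      simp at hj
  refine hu i _ ?_
  have hui : u i * D i = -((φ i (single i 1) - u i) * D i + φ i (D.erase i)) := by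
    linear_combination hsplit
  have hdiag_term : (φ i (single i 1) - u i) * D i ∈ J ^ (k + 1) := by
    rw [pow_succ']
    exact Ideal.mul_mem_mul (hdiag i) (hk i)
  rw [hui]
  exact neg_mem (add_mem hdiag_term hrest)

theorem Finsupp.eq_zero_of_dual_mod
    (hJ : ∀ a : A, (∀ k : ℕ, 1 ≤ k → a ∈ J ^ k) → a = 0)
    (φ : ι → (ι →₀ A) →ₗ[A] A) (u : ι → A)
    (hoff : ∀ i j, i ≠ j → φ i (single j 1) ∈ J) (hdiag : ∀ i, φ i (single i 1) - u i ∈ J)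
    (hu : ∀ k : ℕ, 1 ≤ k → ∀ i a, u i * a ∈ J ^ k → a ∈ J ^ k)
    {D : ι →₀ A} (hD : ∀ i, φ i D = 0) : D = 0 := by
  have hpow : ∀ k j, D j ∈ J ^ k := by
    intro k
    induction k with
    | zero => simp
    | succ k ih =>
      exact apply_mem_pow_succ_of_dual_mod φ u hoff hdiag (hu (k + 1) k.succ_pos) hD ih
  ext j
  exact hJ (D j) fun k _ => hpow k j

end JAdic

theorem theta_product_unique_from_trace_general
    {A : Type*} [CommRing A] (J : Ideal A)
    (hJ : ∀ a : A, (∀ k : ℕ, 1 ≤ k → a ∈ J ^ k) → a = 0)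
    {G : Type*} [AddCommGroup G]
    (μ : (G →₀ A) →ₗ[A] (G →₀ A) →ₗ[A] (G →₀ A))
    (c : G → A)
    (h1 : ∀ g h : G, g + h ≠ 0 → (μ (Finsupp.single g 1) (Finsupp.single h 1)) 0 ∈ J)
    (h2 : ∀ g : G, (μ (Finsupp.single g 1) (Finsupp.single (-g) 1)) 0 - c g ∈ J)
    (h3 : ∀ k : ℕ, 1 ≤ k → ∀ g : G, ∀ a : A, c g * a ∈ J ^ k → a ∈ J ^ k)
    (μ' : (G →₀ A) →ₗ[A] (G →₀ A) →ₗ[A] (G →₀ A))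
    (h2pt : ∀ x y : G →₀ A, (μ' x y) 0 = (μ x y) 0)
    (h3pt : ∀ x y z : G →₀ A, (μ' x (μ' y z)) 0 = (μ x (μ y z)) 0) :
    μ' = μ := by
  let φ : G → (G →₀ A) →ₗ[A] A := fun m => lapply 0 ∘ₗ μ (single (-m) 1)
  have hoff : ∀ m n, m ≠ n → φ m (single n 1) ∈ J := fun m n hmn =>
    h1 (-m) n fun h => hmn (neg_add_eq_zero.mp h)
  have hdiag : ∀ m, φ m (single m 1) - c (-m) ∈ J := fun m => by
    simpa [φ] using h2 (-m)
  refine LinearMap.ext fun x => LinearMap.ext fun y => sub_eq_zero.mp ?_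
  refine eq_zero_of_dual_mod hJ φ (c ∘ Neg.neg) hoff hdiag (fun k hk _ => h3 k hk _) fun m => ?_
  simp only [φ, LinearMap.comp_apply, lapply_apply, map_sub]
  rw [← h2pt, h3pt, sub_self]

/-- Abstract formulation of Theorem 3.1 (thm_frob_unique): the product structure on the
algebra of theta functions is uniquely determined by the values of the trace map (the
projection `T` onto the coefficient of `ϑ₀`, i.e. `x ↦ x 0`) on products of two and three
theta functions.  Here `R = ⊕_{g ∈ G} A` is the free module on basis `(ϑ_g) = (single g 1)`,
`J` is an ideal of `A` with `⋂ₖ Jᵏ = 0`, and the product `μ` pairs `ϑ_g` with `ϑ_h`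
trivially mod `J` unless `g + h = 0`, in which case the trace is `c_g` mod `J`, with each
`c_g` a non-zerodivisor modulo every `Jᵏ`. -/
theorem theta_product_unique_from_trace
    {A : Type*} [CommRing A] (J : Ideal A)
    (hJ : ∀ a : A, (∀ k : ℕ, 1 ≤ k → a ∈ J ^ k) → a = 0)
    {G : Type*} [AddCommGroup G]
    (μ : (G →₀ A) →ₗ[A] (G →₀ A) →ₗ[A] (G →₀ A))
    (hassoc : ∀ x y z : G →₀ A, μ (μ x y) z = μ x (μ y z))
    (c : G → A)
    (h1 : ∀ g h : G, g + h ≠ 0 → (μ (Finsupp.single g 1) (Finsupp.single h 1)) 0 ∈ J)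
    (h2 : ∀ g : G, (μ (Finsupp.single g 1) (Finsupp.single (-g) 1)) 0 - c g ∈ J)
    (h3 : ∀ k : ℕ, 1 ≤ k → ∀ g : G, ∀ a : A, c g * a ∈ J ^ k → a ∈ J ^ k)
    (μ' : (G →₀ A) →ₗ[A] (G →₀ A) →ₗ[A] (G →₀ A))
    (hassoc' : ∀ x y z : G →₀ A, μ' (μ' x y) z = μ' x (μ' y z))
    (h2pt : ∀ x y : G →₀ A, (μ' x y) 0 = (μ x y) 0)
    (h3pt : ∀ x y z : G →₀ A, (μ' x (μ' y z)) 0 = (μ x (μ y z)) 0) :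
    μ' = μ :=
  theta_product_unique_from_trace_general J hJ μ c h1 h2 h3 μ' h2pt h3pt
end
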